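/- (Non-autonomous quantum Hénon–Heiles system: quantum Frobenius condition.) For all (t_1, t_2) ∈ ℝ² and every smooth f : {x ∈ ℝ² : x_2 ≠ 0} → ℂ: iħ (∂Ĥ_1/∂t_2) f − iħ (∂Ĥ_2/∂t_1) f + [Ĥ_1, Ĥ_2] f = 0. -/

import Mathlib

noncomputable section

open scoped BigOperators

namespace P3

/-- Partial derivative `∂f/∂x_j` of a complex-valued function on `ℝ^n`. -/
def pdC (n : ℕ) (j : Fin n) (f : (Fin n → ℝ) → ℂ) (x : Fin n → ℝ) : ℂ :=
  fderiv ℝ f x (Pi.single j 1)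

/-- First quantum Hamiltonian of the non-autonomous quantum Hénon–Heiles
system (`x_1 = x 0`, `x_2 = x 1`, `∂_1 = pdC 2 0`, `∂_2 = pdC 2 1`). -/
def HHq1 (hb a t1 t2 : ℝ) (f : (Fin 2 → ℝ) → ℂ) (x : Fin 2 → ℝ) : ℂ :=
  -((hb : ℂ) ^ 2 / 2) *
      (pdC 2 0 (fun y => pdC 2 0 f y) x + pdC 2 1 (fun y => pdC 2 1 f y) x)
    + ((((x 0) ^ 3 + (1 / 2) * (x 0) * (x 1) ^ 2 + a * ((x 1) ^ 2)⁻¹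
        + 3 * t2 * ((x 0) ^ 2 + (1 / 4) * (x 1) ^ 2)
        + (t1 + 3 * t2 ^ 2) * (x 0) : ℝ)) : ℂ) * f x

/-- Second quantum Hamiltonian of the non-autonomous quantum Hénon–Heiles
system. -/
def HHq2 (hb a t1 t2 : ℝ) (f : (Fin 2 → ℝ) → ℂ) (x : Fin 2 → ℝ) : ℂ :=
  -((hb : ℂ) ^ 2 / 2) *
      (((x 1 : ℝ) : ℂ) * pdC 2 0 (fun y => pdC 2 1 f y) x
        - ((x 0 : ℝ) : ℂ) * pdC 2 1 (fun y => pdC 2 1 f y) x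
        + (1 / 2 : ℂ) * pdC 2 0 f x)
    + Complex.I * (hb : ℂ) * pdC 2 0 f x
    + ((((1 / 16) * (x 1) ^ 4 + (1 / 4) * (x 0) ^ 2 * (x 1) ^ 2
        - a * (x 0) * ((x 1) ^ 2)⁻¹ + (3 / 4) * t2 * (x 0) * (x 1) ^ 2
        + (1 / 4) * (t1 + 3 * t2 ^ 2) * (x 1) ^ 2
        - ((1 / 2) * t1 ^ 2 + 3 * t1 * t2 ^ 2) : ℝ)) : ℂ) * f x

abbrev U2 : Set (Fin 2 → ℝ) := {x | x 1 ≠ 0}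

lemma isOpen_U2 : IsOpen U2 := by
  have : U2 = (fun x : Fin 2 → ℝ => x 1) ⁻¹' {0}ᶜ := rfl
  rw [this]; exact isOpen_compl_singleton.preimage (continuous_apply 1)

lemma contDiffOn_pdC {g : (Fin 2 → ℝ) → ℂ} (hg : ContDiffOn ℝ (⊤ : ℕ∞) g U2) (j : Fin 2) :
    ContDiffOn ℝ (⊤ : ℕ∞) (pdC 2 j g) U2 :=
  (hg.fderiv_of_isOpen isOpen_U2 (by simp)).clm_apply contDiffOn_const

lemma diffAt_of_contDiffOn {g : (Fin 2 → ℝ) → ℂ} (hg : ContDiffOn ℝ (⊤ : ℕ∞) g U2)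
    {y : Fin 2 → ℝ} (hy : y ∈ U2) : DifferentiableAt ℝ g y :=
  ((hg.contDiffAt (isOpen_U2.mem_nhds hy)).differentiableAt (by simp))

lemma pdC_congr {g h : (Fin 2 → ℝ) → ℂ} {y : Fin 2 → ℝ} (j : Fin 2)
    (hgh : ∀ z ∈ U2, g z = h z) (hy : y ∈ U2) : pdC 2 j g y = pdC 2 j h y := by
  have : g =ᶠ[nhds y] h := by
    filter_upwards [isOpen_U2.mem_nhds hy] with z hz using hgh z hz
  rw [pdC, pdC, this.fderiv_eq]

lemma pdC_pdC_eq {g : (Fin 2 → ℝ) → ℂ} {y : Fin 2 → ℝ}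
    (hd : DifferentiableAt ℝ (fderiv ℝ g) y) (j k : Fin 2) :
    pdC 2 j (pdC 2 k g) y
      = fderiv ℝ (fderiv ℝ g) y (Pi.single j 1) (Pi.single k 1) := by
  have : pdC 2 j (pdC 2 k g) y
      = fderiv ℝ (fun z => fderiv ℝ g z (Pi.single k 1)) y (Pi.single j 1) := rfl
  rw [this, fderiv_clm_apply hd (differentiableAt_const _)]
  simp

lemma pdC_comm {g : (Fin 2 → ℝ) → ℂ} (hg : ContDiffOn ℝ (⊤ : ℕ∞) g U2)
    {y : Fin 2 → ℝ} (hy : y ∈ U2) :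
    pdC 2 0 (pdC 2 1 g) y = pdC 2 1 (pdC 2 0 g) y := by
  have hCA : ContDiffAt ℝ (⊤ : ℕ∞) g y := hg.contDiffAt (isOpen_U2.mem_nhds hy)
  have hsym := hCA.isSymmSndFDerivAt (by rw [minSmoothness_of_isRCLikeNormedField]; exact WithTop.coe_le_coe.mpr le_top)
  have hd : DifferentiableAt ℝ (fderiv ℝ g) y :=
    ((hg.fderiv_of_isOpen isOpen_U2 (m := (⊤ : ℕ∞)) (by simp)).contDiffAt
      (isOpen_U2.mem_nhds hy)).differentiableAt (by simp)
  rw [pdC_pdC_eq hd, pdC_pdC_eq hd]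
  exact hsym _ _

lemma pdC_add {g h : (Fin 2 → ℝ) → ℂ} {y : Fin 2 → ℝ} (j : Fin 2)
    (hg : DifferentiableAt ℝ g y) (hh : DifferentiableAt ℝ h y) :
    pdC 2 j (fun z => g z + h z) y = pdC 2 j g y + pdC 2 j h y := by
  simp [pdC, fderiv_fun_add hg hh]

/-- iterated partial derivative along a word (head = outermost). -/
def pdW : List (Fin 2) → ((Fin 2 → ℝ) → ℂ) → ((Fin 2 → ℝ) → ℂ)
  | [], g => g
  | j :: w, g => pdC 2 j (pdW w g)

lemma contDiffOn_pdW {f : (Fin 2 → ℝ) → ℂ} (hf : ContDiffOn ℝ (⊤ : ℕ∞) f U2) :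
    ∀ w : List (Fin 2), ContDiffOn ℝ (⊤ : ℕ∞) (pdW w f) U2
  | [] => hf
  | j :: w => contDiffOn_pdC (contDiffOn_pdW hf w) j

lemma pdW_append (u v : List (Fin 2)) (f : (Fin 2 → ℝ) → ℂ) :
    pdW (u ++ v) f = pdW u (pdW v f) := by
  induction u with
  | nil => rfl
  | cons j u ih => simp [pdW, ih]

lemma pdW_congr (u : List (Fin 2)) {g h : (Fin 2 → ℝ) → ℂ}
    (hgh : ∀ z ∈ U2, g z = h z) : ∀ y ∈ U2, pdW u g y = pdW u h y := by
  induction u with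
  | nil => exact hgh
  | cons j u ih => exact fun y hy => pdC_congr j ih hy

lemma pdW_swap {f : (Fin 2 → ℝ) → ℂ} (hf : ContDiffOn ℝ (⊤ : ℕ∞) f U2)
    (u v : List (Fin 2)) {x : Fin 2 → ℝ} (hx : x ∈ U2) :
    pdW (u ++ 1 :: 0 :: v) f x = pdW (u ++ 0 :: 1 :: v) f x := by
  rw [pdW_append, pdW_append]
  exact pdW_congr u
    (fun y hy => (pdC_comm (contDiffOn_pdW hf v) hy).symm) x hx

/-- a single monomial term `c * x0^m * x1^p * x1⁻¹^q * ∂_w f`. -/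
structure Tm where
  c : ℂ
  m : ℕ
  p : ℕ
  q : ℕ
  w : List (Fin 2)

def evTm (f : (Fin 2 → ℝ) → ℂ) (t : Tm) (y : Fin 2 → ℝ) : ℂ :=
  t.c * ((y 0 : ℝ) : ℂ) ^ t.m * ((y 1 : ℝ) : ℂ) ^ t.p * (((y 1 : ℝ) : ℂ)⁻¹) ^ t.q
    * pdW t.w f y

def evL (f : (Fin 2 → ℝ) → ℂ) (L : List Tm) (y : Fin 2 → ℝ) : ℂ :=
  (L.map fun t => evTm f t y).sum

def dTm (j : Fin 2) (t : Tm) : List Tm :=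
  if j = 0 then
    [⟨t.c * t.m, t.m - 1, t.p, t.q, t.w⟩, ⟨t.c, t.m, t.p, t.q, 0 :: t.w⟩]
  else
    [⟨t.c * t.p, t.m, t.p - 1, t.q, t.w⟩, ⟨-(t.c * t.q), t.m, t.p, t.q + 1, t.w⟩,
      ⟨t.c, t.m, t.p, t.q, 1 :: t.w⟩]

def dL (j : Fin 2) (L : List Tm) : List Tm := L.flatMap (dTm j)

lemma dTm0 (t : Tm) :
    dTm 0 t = [⟨t.c * t.m, t.m - 1, t.p, t.q, t.w⟩, ⟨t.c, t.m, t.p, t.q, 0 :: t.w⟩] := by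
  simp [dTm]

lemma dTm1 (t : Tm) :
    dTm 1 t = [⟨t.c * t.p, t.m, t.p - 1, t.q, t.w⟩,
      ⟨-(t.c * t.q), t.m, t.p, t.q + 1, t.w⟩, ⟨t.c, t.m, t.p, t.q, 1 :: t.w⟩] := by
  simp [dTm]

lemma evL_nil (f) (y) : evL f [] y = 0 := rfl

lemma evL_cons (f) (t : Tm) (L : List Tm) (y) :
    evL f (t :: L) y = evTm f t y + evL f L y := by simp [evL]

lemma evL_append (f) (L1 L2 : List Tm) (y) :
    evL f (L1 ++ L2) y = evL f L1 y + evL f L2 y := by simp [evL]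

/-- core: explicit fderiv facts for a single term. -/
lemma tm_core {f : (Fin 2 → ℝ) → ℂ} (hf : ContDiffOn ℝ (⊤ : ℕ∞) f U2) (t : Tm)
    {y : Fin 2 → ℝ} (hy : y ∈ U2) :
    DifferentiableAt ℝ (fun z => evTm f t z) y
    ∧ pdC 2 0 (fun z => evTm f t z) y = evL f (dTm 0 t) y
    ∧ pdC 2 1 (fun z => evTm f t z) y = evL f (dTm 1 t) y := by
  obtain ⟨c, m, p, q, w⟩ := t
  have hy1 : y 1 ≠ 0 := hy
  have hy' : ((y 1 : ℝ) : ℂ) ≠ 0 := by exact_mod_cast hy1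
  have hg : DifferentiableAt ℝ (pdW w f) y :=
    diffAt_of_contDiffOn (contDiffOn_pdW hf w) hy
  have h0 : HasFDerivAt (fun z : Fin 2 → ℝ => ((z 0 : ℝ) : ℂ))
      (Complex.ofRealCLM.comp (ContinuousLinearMap.proj 0)) y :=
    Complex.ofRealCLM.hasFDerivAt.comp y (hasFDerivAt_apply 0 y)
  have h1 : HasFDerivAt (fun z : Fin 2 → ℝ => ((z 1 : ℝ) : ℂ))
      (Complex.ofRealCLM.comp (ContinuousLinearMap.proj 1)) y :=
    Complex.ofRealCLM.hasFDerivAt.comp y (hasFDerivAt_apply 1 y)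
  have h0m : HasFDerivAt (fun z : Fin 2 → ℝ => ((z 0 : ℝ) : ℂ) ^ m)
      (((m : ℂ) * ((y 0 : ℝ) : ℂ) ^ (m - 1)) •
        (Complex.ofRealCLM.comp (ContinuousLinearMap.proj 0))) y :=
    (hasDerivAt_pow m ((y 0 : ℝ) : ℂ)).comp_hasFDerivAt y h0
  have h1p : HasFDerivAt (fun z : Fin 2 → ℝ => ((z 1 : ℝ) : ℂ) ^ p)
      (((p : ℂ) * ((y 1 : ℝ) : ℂ) ^ (p - 1)) •
        (Complex.ofRealCLM.comp (ContinuousLinearMap.proj 1))) y :=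
    (hasDerivAt_pow p ((y 1 : ℝ) : ℂ)).comp_hasFDerivAt y h1
  have hinvq : HasFDerivAt (fun z : Fin 2 → ℝ => (((z 1 : ℝ) : ℂ)⁻¹) ^ q)
      ((((-q : ℤ) : ℂ) * ((y 1 : ℝ) : ℂ) ^ ((-q : ℤ) - 1)) •
        (Complex.ofRealCLM.comp (ContinuousLinearMap.proj 1))) y := by
    have h := (hasDerivAt_zpow (-q : ℤ) ((y 1 : ℝ) : ℂ) (Or.inl hy')).comp_hasFDerivAt y h1
    have he : (fun z : Fin 2 → ℝ => (((z 1 : ℝ) : ℂ)⁻¹) ^ q)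
        = (fun w : ℂ => w ^ (-q : ℤ)) ∘ (fun z : Fin 2 → ℝ => ((z 1 : ℝ) : ℂ)) := by
      funext z; simp [zpow_neg, Function.comp]
    rw [he]; exact h
  have hprod := (((h0m.const_mul c).fun_mul h1p).fun_mul hinvq).fun_mul hg.hasFDerivAt
  have hev : (fun z => evTm f ⟨c, m, p, q, w⟩ z)
      = fun z : Fin 2 → ℝ =>
        c * ((z 0 : ℝ) : ℂ) ^ m * ((z 1 : ℝ) : ℂ) ^ p * (((z 1 : ℝ) : ℂ)⁻¹) ^ q
          * pdW w f z := rfl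
  have hz : ((y 1 : ℝ) : ℂ) ^ ((-q : ℤ) - 1) = (((y 1 : ℝ) : ℂ)⁻¹) ^ (q + 1) := by
    rw [show (-q : ℤ) - 1 = -((q : ℤ) + 1) by ring, zpow_neg, ← inv_zpow]
    norm_cast
  refine ⟨hev ▸ hprod.differentiableAt, ?_, ?_⟩
  · rw [hev, pdC, hprod.fderiv]
    simp only [dTm0]
    simp only [evL_cons, evL_nil, add_zero]
    simp only [evTm, pdW]
    simp only [ContinuousLinearMap.add_apply, ContinuousLinearMap.smul_apply,
      ContinuousLinearMap.comp_apply, ContinuousLinearMap.proj_apply,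
      Complex.ofRealCLM_apply, smul_eq_mul,
      Pi.single_eq_same, ne_eq, Fin.one_eq_zero_iff, OfNat.ofNat_ne_one,
      not_false_eq_true, Pi.single_eq_of_ne, pdC]
    push_cast
    ring
  · rw [hev, pdC, hprod.fderiv]
    simp only [dTm1]
    simp only [evL_cons, evL_nil, add_zero]
    simp only [evTm, pdW]
    simp only [ContinuousLinearMap.add_apply, ContinuousLinearMap.smul_apply,
      ContinuousLinearMap.comp_apply, ContinuousLinearMap.proj_apply,
      Complex.ofRealCLM_apply, smul_eq_mul,
      Pi.single_eq_same, ne_eq, Fin.zero_eq_one_iff, OfNat.ofNat_ne_one,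
      not_false_eq_true, Pi.single_eq_of_ne, hz, pdC]
    push_cast
    ring

lemma diff_evL {f : (Fin 2 → ℝ) → ℂ} (hf : ContDiffOn ℝ (⊤ : ℕ∞) f U2) (L : List Tm)
    {y : Fin 2 → ℝ} (hy : y ∈ U2) : DifferentiableAt ℝ (evL f L) y := by
  induction L with
  | nil =>
      have h0 : evL f ([] : List Tm) = fun _ => (0 : ℂ) := rfl
      rw [h0]; exact differentiableAt_const 0
  | cons t L ih =>
      have : evL f (t :: L) = fun z => evTm f t z + evL f L z := by
        funext z; simp [evL_cons]
      rw [this]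
      exact ((tm_core hf t hy).1).add ih

lemma pd_evL {f : (Fin 2 → ℝ) → ℂ} (hf : ContDiffOn ℝ (⊤ : ℕ∞) f U2) (j : Fin 2) (L : List Tm)
    {y : Fin 2 → ℝ} (hy : y ∈ U2) :
    pdC 2 j (evL f L) y = evL f (dL j L) y := by
  induction L with
  | nil =>
      have : evL f ([] : List Tm) = fun _ => (0 : ℂ) := rfl
      rw [this]
      simp [pdC, dL, evL]
  | cons t L ih =>
      have h1 : evL f (t :: L) = fun z => evTm f t z + evL f L z := by
        funext z; simp [evL_cons]
      have h2 : dL j (t :: L) = dTm j t ++ dL j L := by simp [dL]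
      rw [h1, h2, evL_append,
        pdC_add j (tm_core hf t hy).1 (diff_evL hf L hy), ih]
      congr 1
      fin_cases j
      · exact (tm_core hf t hy).2.1
      · exact (tm_core hf t hy).2.2

lemma pdW_nil (f : (Fin 2 → ℝ) → ℂ) : pdW [] f = f := rfl

/-- term list representing `HHq1 hb a t1 t2 f`. -/
def L1 (hb a t1 t2 : ℝ) : List Tm :=
  [⟨-((hb:ℂ)^2/2), 0, 0, 0, [0,0]⟩,
   ⟨-((hb:ℂ)^2/2), 0, 0, 0, [1,1]⟩,
   ⟨1, 3, 0, 0, []⟩,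
   ⟨(1/2 : ℂ), 1, 2, 0, []⟩,
   ⟨(a : ℂ), 0, 0, 2, []⟩,
   ⟨3*(t2:ℂ), 2, 0, 0, []⟩,
   ⟨(3/4 : ℂ)*(t2:ℂ), 0, 2, 0, []⟩,
   ⟨(t1:ℂ), 1, 0, 0, []⟩,
   ⟨3*(t2:ℂ)^2, 1, 0, 0, []⟩]

/-- term list representing `HHq2 hb a t1 t2 f`. -/
def L2 (hb a t1 t2 : ℝ) : List Tm :=
  [⟨-((hb:ℂ)^2/2), 0, 1, 0, [0,1]⟩,
   ⟨(hb:ℂ)^2/2, 1, 0, 0, [1,1]⟩,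
   ⟨-((hb:ℂ)^2/4), 0, 0, 0, [0]⟩,
   ⟨Complex.I*(hb:ℂ), 0, 0, 0, [0]⟩,
   ⟨(1/16 : ℂ), 0, 4, 0, []⟩,
   ⟨(1/4 : ℂ), 2, 2, 0, []⟩,
   ⟨-(a : ℂ), 1, 0, 2, []⟩,
   ⟨(3/4 : ℂ)*(t2:ℂ), 1, 2, 0, []⟩,
   ⟨(1/4 : ℂ)*(t1:ℂ), 0, 2, 0, []⟩,
   ⟨(3/4 : ℂ)*(t2:ℂ)^2, 0, 2, 0, []⟩,
   ⟨-((t1:ℂ)^2/2), 0, 0, 0, []⟩,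
   ⟨-(3*(t1:ℂ)*(t2:ℂ)^2), 0, 0, 0, []⟩]

lemma deriv_quadratic (A B C : ℂ) (s0 : ℝ) :
    deriv (fun s : ℝ => A + B * (s : ℂ) + C * (s : ℂ) ^ 2) s0
      = B + 2 * C * (s0 : ℂ) := by
  have h1 : HasDerivAt (fun s : ℝ => ((s : ℝ) : ℂ)) 1 s0 := by
    simpa using (hasDerivAt_id s0).ofReal_comp
  have hq := (hasDerivAt_pow 2 ((s0 : ℝ) : ℂ)).comp_ofReal
  have hq2 := hq.const_mul C
  have hlin := h1.const_mul B
  have hcon : HasDerivAt (fun _ : ℝ => A) 0 s0 := hasDerivAt_const s0 A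
  have h2 := (hcon.fun_add hlin).fun_add hq2
  rw [h2.deriv]; push_cast; ring

set_option maxHeartbeats 8000000 in
/-- The non-autonomous quantum Hénon–Heiles Hamiltonians
satisfy the quantum Frobenius condition. -/
theorem quantum_henon_heiles_frobenius (hb : ℝ) (hhb : hb ≠ 0) (a t1 t2 : ℝ)
    (f : (Fin 2 → ℝ) → ℂ)
    (hf : ContDiffOn ℝ (⊤ : ℕ∞) f {x : Fin 2 → ℝ | x 1 ≠ 0})
    (x : Fin 2 → ℝ) (hx : x 1 ≠ 0) :
    Complex.I * (hb : ℂ) * deriv (fun s : ℝ => HHq1 hb a t1 s f x) t2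
      - Complex.I * (hb : ℂ) * deriv (fun s : ℝ => HHq2 hb a s t2 f x) t1
      + (HHq1 hb a t1 t2 (HHq2 hb a t1 t2 f) x
          - HHq2 hb a t1 t2 (HHq1 hb a t1 t2 f) x) = 0 := by
  have hxU : x ∈ U2 := hx
  have hX : ((x 1 : ℝ) : ℂ) ≠ 0 := by exact_mod_cast hx
  -- the Hamiltonians as explicit term lists
  have hG1 : HHq1 hb a t1 t2 f = evL f (L1 hb a t1 t2) := by
    funext y
    simp only [HHq1, L1, evL_cons, evL_nil, evTm, pdW]
    push_cast
    ring
  have hG2 : HHq2 hb a t1 t2 f = evL f (L2 hb a t1 t2) := by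
    funext y
    simp only [HHq2, L2, evL_cons, evL_nil, evTm, pdW]
    push_cast
    ring
  -- time derivatives
  have hd1 : deriv (fun s : ℝ => HHq1 hb a t1 s f x) t2
      = (3 * ((x 0 : ℂ) ^ 2 + (1/4) * (x 1 : ℂ) ^ 2)) * f x
        + 2 * ((3 * (x 0 : ℂ)) * f x) * (t2 : ℂ) := by
    have hfun : (fun s : ℝ => HHq1 hb a t1 s f x)
        = fun s : ℝ =>
          (-((hb : ℂ) ^ 2 / 2) *
              (pdC 2 0 (fun y => pdC 2 0 f y) x + pdC 2 1 (fun y => pdC 2 1 f y) x)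
            + ((x 0 : ℂ) ^ 3 + (1/2) * (x 0 : ℂ) * (x 1 : ℂ) ^ 2
                + (a : ℂ) * (((x 1 : ℂ)) ^ 2)⁻¹ + (t1 : ℂ) * (x 0 : ℂ)) * f x)
          + ((3 * ((x 0 : ℂ) ^ 2 + (1/4) * (x 1 : ℂ) ^ 2)) * f x) * (s : ℂ)
          + ((3 * (x 0 : ℂ)) * f x) * (s : ℂ) ^ 2 := by
      funext s
      simp only [HHq1]
      push_cast
      ring
    rw [hfun]; exact deriv_quadratic _ _ _ t2
  have hd2 : deriv (fun s : ℝ => HHq2 hb a s t2 f x) t1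
      = ((1/4) * (x 1 : ℂ) ^ 2 - 3 * (t2 : ℂ) ^ 2) * f x
        + 2 * (-(1/2) * f x) * (t1 : ℂ) := by
    have hfun : (fun s : ℝ => HHq2 hb a s t2 f x)
        = fun s : ℝ =>
          (-((hb : ℂ) ^ 2 / 2) *
              (((x 1 : ℝ) : ℂ) * pdC 2 0 (fun y => pdC 2 1 f y) x
                - ((x 0 : ℝ) : ℂ) * pdC 2 1 (fun y => pdC 2 1 f y) x
                + (1 / 2 : ℂ) * pdC 2 0 f x)
            + Complex.I * (hb : ℂ) * pdC 2 0 f x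
            + ((1/16) * (x 1 : ℂ) ^ 4 + (1/4) * (x 0 : ℂ) ^ 2 * (x 1 : ℂ) ^ 2
                - (a : ℂ) * (x 0 : ℂ) * (((x 1 : ℂ)) ^ 2)⁻¹
                + (3/4) * (t2 : ℂ) * (x 0 : ℂ) * (x 1 : ℂ) ^ 2
                + (3/4) * (t2 : ℂ) ^ 2 * (x 1 : ℂ) ^ 2) * f x)
          + (((1/4) * (x 1 : ℂ) ^ 2 - 3 * (t2 : ℂ) ^ 2) * f x) * (s : ℂ)
          + (-(1/2) * f x) * (s : ℂ) ^ 2 := by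
      funext s
      simp only [HHq2]
      push_cast
      ring
    rw [hfun]; exact deriv_quadratic _ _ _ t1
  -- derivative computations on term lists
  have e00 : pdC 2 0 (fun y => pdC 2 0 (evL f (L2 hb a t1 t2)) y) x
      = evL f (dL 0 (dL 0 (L2 hb a t1 t2))) x :=
    (pdC_congr 0 (fun z hz => pd_evL hf 0 _ hz) hxU).trans (pd_evL hf 0 _ hxU)
  have e11 : pdC 2 1 (fun y => pdC 2 1 (evL f (L2 hb a t1 t2)) y) x
      = evL f (dL 1 (dL 1 (L2 hb a t1 t2))) x :=
    (pdC_congr 1 (fun z hz => pd_evL hf 1 _ hz) hxU).trans (pd_evL hf 1 _ hxU)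
  have e01 : pdC 2 0 (fun y => pdC 2 1 (evL f (L1 hb a t1 t2)) y) x
      = evL f (dL 0 (dL 1 (L1 hb a t1 t2))) x :=
    (pdC_congr 0 (fun z hz => pd_evL hf 1 _ hz) hxU).trans (pd_evL hf 0 _ hxU)
  have e11' : pdC 2 1 (fun y => pdC 2 1 (evL f (L1 hb a t1 t2)) y) x
      = evL f (dL 1 (dL 1 (L1 hb a t1 t2))) x :=
    (pdC_congr 1 (fun z hz => pd_evL hf 1 _ hz) hxU).trans (pd_evL hf 1 _ hxU)
  have e0 : pdC 2 0 (evL f (L1 hb a t1 t2)) x = evL f (dL 0 (L1 hb a t1 t2)) x :=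
    pd_evL hf 0 _ hxU
  -- Schwarz symmetries
  have hsw10 : pdW [1,0] f x = pdW [0,1] f x := pdW_swap hf [] [] hxU
  have hsw101 : pdW [1,0,1] f x = pdW [0,1,1] f x := pdW_swap hf [] [1] hxU
  have hsw110 : pdW [1,1,0] f x = pdW [0,1,1] f x :=
    (pdW_swap hf [1] [] hxU).trans hsw101
  have hsw100 : pdW [1,0,0] f x = pdW [0,0,1] f x :=
    (pdW_swap hf [] [0] hxU).trans (pdW_swap hf [0] [] hxU)
  have hsw0100 : pdW [0,1,0,0] f x = pdW [0,0,0,1] f x :=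
    (pdW_swap hf [0] [0] hxU).trans (pdW_swap hf [0,0] [] hxU)
  have hsw1101 : pdW [1,1,0,1] f x = pdW [0,1,1,1] f x :=
    (pdW_swap hf [1] [1] hxU).trans (pdW_swap hf [] [1,1] hxU)
  have hsw1100 : pdW [1,1,0,0] f x = pdW [0,0,1,1] f x :=
    (((pdW_swap hf [1] [0] hxU).trans (pdW_swap hf [] [1,0] hxU)).trans
      (pdW_swap hf [0,1] [] hxU)).trans (pdW_swap hf [0] [1] hxU)
  -- assemble
  rw [hd1, hd2, hG1, hG2]
  simp only [HHq1, HHq2]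
  rw [e00, e11, e01, e11', e0]
  simp only [L1, L2, dL, List.flatMap_cons, List.flatMap_nil, dTm0, dTm1,
    List.append_nil, List.cons_append, List.nil_append,
    evL_cons, evL_nil, evTm, pdW_nil, Nat.reduceSub, Nat.reduceAdd,
    Nat.cast_ofNat, Nat.cast_one, Nat.cast_zero]
  simp only [hsw10, hsw101, hsw110, hsw100, hsw0100, hsw1101, hsw1100]
  push_cast
  linear_combination (-(a : ℂ) * (hb : ℂ)^2 * ((x 1 : ℂ)⁻¹)^2 * pdW [0] f x) *
    (mul_inv_cancel₀ hX)


end P3
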